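/- arXiv:1112.5888 — 5 statements merged into one kernel-verified Lean document; each statement's English description precedes it below -/
import Mathlib

section
/- Let X be a Banach space and Z a dual Banach space (Z = W* for some Banach space W). Suppose there is a constant C₀ ≥ 1 such that for every subset A ⊆ X, every Lipschitz mapping f : A → Z, and every ε > 0 there exists a Lipschitz mapping g : X → Z with ‖f(x) − g(x)‖ < ε for all x ∈ A and Lip(g) ≤ C₀·Lip(f). Then every Lipschitz mapping f : A → Z defined on a subset A ⊆ X extends to a Lipschitz mapping F : X → Z with F|_A = f and Lip(F) ≤ C₀·Lip(f). -/
open Filter Topology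

/-- Limit of a real sequence along an ultrafilter. -/
noncomputable def ulim (U : Ultrafilter ℕ) (a : ℕ → ℝ) : ℝ := limUnder (U : Filter ℕ) a

lemma tendsto_ulim (U : Ultrafilter ℕ) {a : ℕ → ℝ} {B : ℝ} (h : ∀ n, |a n| ≤ B) :
    Tendsto a (U : Filter ℕ) (𝓝 (ulim U a)) := by
  have hs : IsCompact (Set.Icc (-B) B) := isCompact_Icc
  have hle : (Ultrafilter.map a U : Filter ℝ) ≤ Filter.principal (Set.Icc (-B) B) := by
    rw [Ultrafilter.coe_map, Filter.le_principal_iff, Filter.mem_map]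
    exact Filter.univ_mem' (fun n => abs_le.1 (h n))
  obtain ⟨c, _, hc⟩ := hs.ultrafilter_le_nhds (Ultrafilter.map a U) hle
  have ht : Tendsto a (U : Filter ℕ) (𝓝 c) := by
    rwa [Ultrafilter.coe_map] at hc
  have heq : ulim U a = c := ht.limUnder_eq
  rw [heq]; exact ht

lemma abs_ulim_le (U : Ultrafilter ℕ) {a : ℕ → ℝ} {B : ℝ} (h : ∀ n, |a n| ≤ B) :
    |ulim U a| ≤ B :=
  le_of_tendsto (tendsto_ulim U h).abs (Filter.Eventually.of_forall h)

/-- If `Z = W*` is a dual Banach space and every Lipschitz map from a subset of `X` into `Z`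
can be uniformly approximated by Lipschitz maps on all of `X` with constant `C₀·Lip(f)`, then
every Lipschitz map `f : A → Z` extends to a Lipschitz map `F : X → Z` with
`Lip(F) ≤ C₀·Lip(f)`. -/
theorem lipschitz_extension_into_dual_of_approximation
    {X W : Type*} [NormedAddCommGroup X] [NormedSpace ℝ X] [CompleteSpace X]
    [NormedAddCommGroup W] [NormedSpace ℝ W] [CompleteSpace W]
    (C₀ : ℝ) (hC₀ : 1 ≤ C₀)
    (happrox : ∀ (A : Set X) (f : X → (W →L[ℝ] ℝ)) (L : ℝ), 0 ≤ L →
      (∀ x ∈ A, ∀ y ∈ A, ‖f x - f y‖ ≤ L * ‖x - y‖) →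
      ∀ ε > (0 : ℝ), ∃ g : X → (W →L[ℝ] ℝ),
        (∀ x ∈ A, ‖f x - g x‖ < ε) ∧ ∀ x y : X, ‖g x - g y‖ ≤ C₀ * L * ‖x - y‖) :
    ∀ (A : Set X) (f : X → (W →L[ℝ] ℝ)) (L : ℝ), 0 ≤ L →
      (∀ x ∈ A, ∀ y ∈ A, ‖f x - f y‖ ≤ L * ‖x - y‖) →
      ∃ F : X → (W →L[ℝ] ℝ),
        (∀ a ∈ A, F a = f a) ∧ ∀ x y : X, ‖F x - F y‖ ≤ C₀ * L * ‖x - y‖ := by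
  intro A f L hL hf
  have hC₀0 : (0:ℝ) ≤ C₀ := le_trans zero_le_one hC₀
  by_cases hA : A.Nonempty
  · obtain ⟨a₀, ha₀⟩ := hA
    choose g hg1 hg2 using fun n : ℕ =>
      happrox A f L hL hf (1/(n+1)) (by positivity)
    set U : Ultrafilter ℕ := Filter.hyperfilter ℕ with hU
    set M : X → ℝ := fun x => ‖f a₀‖ + 1 + C₀ * L * ‖x - a₀‖ with hM
    have hMx : ∀ x n, ‖g n x‖ ≤ M x := by
      intro x n
      have h1 : ‖g n x - g n a₀‖ ≤ C₀ * L * ‖x - a₀‖ := hg2 n x a₀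
      have h2 : ‖f a₀ - g n a₀‖ < 1 := by
        refine lt_of_lt_of_le (hg1 n a₀ ha₀) ?_
        rw [div_le_one (by positivity)]
        linarith [(Nat.cast_nonneg n : (0:ℝ) ≤ n)]
      have h3 : ‖g n a₀‖ ≤ ‖f a₀‖ + 1 := by
        calc ‖g n a₀‖ = ‖f a₀ - (f a₀ - g n a₀)‖ := by rw [sub_sub_cancel]
          _ ≤ ‖f a₀‖ + ‖f a₀ - g n a₀‖ := norm_sub_le _ _
          _ ≤ ‖f a₀‖ + 1 := by linarith
      calc ‖g n x‖ = ‖(g n x - g n a₀) + g n a₀‖ := by rw [sub_add_cancel]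
        _ ≤ ‖g n x - g n a₀‖ + ‖g n a₀‖ := norm_add_le _ _
        _ ≤ M x := by rw [hM]; dsimp only; linarith
    have hb : ∀ x (w : W) (n : ℕ), |(g n x) w| ≤ M x * ‖w‖ := by
      intro x w n
      calc |(g n x) w| = ‖(g n x) w‖ := rfl
        _ ≤ ‖g n x‖ * ‖w‖ := (g n x).le_opNorm w
        _ ≤ M x * ‖w‖ := by gcongr; exact hMx x n
    let Flin : X → (W →ₗ[ℝ] ℝ) := fun x =>
      { toFun := fun w => ulim U (fun n => g n x w)
        map_add' := by
          intro w w'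
          have h1 := tendsto_ulim U (fun n => hb x w n)
          have h2 := tendsto_ulim U (fun n => hb x w' n)
          have h3 := tendsto_ulim U (fun n => hb x (w + w') n)
          refine tendsto_nhds_unique h3 ?_
          simpa [map_add] using h1.add h2
        map_smul' := by
          intro c w
          have h1 := tendsto_ulim U (fun n => hb x w n)
          have h3 := tendsto_ulim U (fun n => hb x (c • w) n)
          refine tendsto_nhds_unique h3 ?_
          simpa [map_smul, smul_eq_mul] using h1.const_mul c }
    have hFlin : ∀ x w, Flin x w = ulim U (fun n => g n x w) := fun x w => rfl
    let F : X → (W →L[ℝ] ℝ) := fun x =>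
      LinearMap.mkContinuous (Flin x) (M x) (by
        intro w
        rw [hFlin]
        exact abs_ulim_le U (fun n => hb x w n))
    have hFw : ∀ x w, F x w = ulim U (fun n => g n x w) := fun x w => rfl
    refine ⟨F, ?_, ?_⟩
    · intro a ha
      ext w
      rw [hFw]
      have hbd : ∀ n : ℕ, |(g n a) w - f a w| ≤ ‖w‖ / (n + 1) := by
        intro n
        calc |(g n a) w - f a w| = ‖(g n a - f a) w‖ := by
              simp [ContinuousLinearMap.sub_apply, abs_sub_comm]
          _ ≤ ‖g n a - f a‖ * ‖w‖ := (g n a - f a).le_opNorm w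
          _ ≤ (1/(n+1)) * ‖w‖ := by
              gcongr
              rw [show g n a - f a = -(f a - g n a) by abel, norm_neg]
              exact (hg1 n a ha).le
          _ = ‖w‖ / (n + 1) := by ring
      have htop : Tendsto (fun n : ℕ => (g n a) w) atTop (𝓝 (f a w)) := by
        rw [tendsto_iff_norm_sub_tendsto_zero]
        refine squeeze_zero (fun n => norm_nonneg _) (fun n => hbd n) ?_
        have : Tendsto (fun n : ℕ => ‖w‖ / (n + 1)) atTop (𝓝 0) :=
          tendsto_const_nhds.div_atTop (tendsto_atTop_add_const_right _ 1 tendsto_natCast_atTop_atTop)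
        exact this
      have hUle : (U : Filter ℕ) ≤ atTop := by
        rw [hU, ← Nat.cofinite_eq_atTop]
        exact Filter.hyperfilter_le_cofinite
      have htU : Tendsto (fun n : ℕ => (g n a) w) (U : Filter ℕ) (𝓝 (f a w)) :=
        htop.mono_left hUle
      exact htU.limUnder_eq
    · intro x y
      refine ContinuousLinearMap.opNorm_le_bound _ (by positivity) ?_
      intro w
      have h1 := tendsto_ulim U (fun n => hb x w n)
      have h2 := tendsto_ulim U (fun n => hb y w n)
      have hsub : Tendsto (fun n => (g n x) w - (g n y) w) (U : Filter ℕ)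
          (𝓝 (ulim U (fun n => g n x w) - ulim U (fun n => g n y w))) := h1.sub h2
      have hbd : ∀ n : ℕ, |(g n x) w - (g n y) w| ≤ C₀ * L * ‖x - y‖ * ‖w‖ := by
        intro n
        calc |(g n x) w - (g n y) w| = ‖(g n x - g n y) w‖ := by
              simp [ContinuousLinearMap.sub_apply]
          _ ≤ ‖g n x - g n y‖ * ‖w‖ := (g n x - g n y).le_opNorm w
          _ ≤ C₀ * L * ‖x - y‖ * ‖w‖ := by gcongr; exact hg2 n x y
      have : |ulim U (fun n => g n x w) - ulim U (fun n => g n y w)| ≤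
          C₀ * L * ‖x - y‖ * ‖w‖ :=
        le_of_tendsto hsub.abs (Filter.Eventually.of_forall hbd)
      calc ‖(F x - F y) w‖ = |ulim U (fun n => g n x w) - ulim U (fun n => g n y w)| := by
            simp [ContinuousLinearMap.sub_apply, hFw, Real.norm_eq_abs]
        _ ≤ C₀ * L * ‖x - y‖ * ‖w‖ := this
  · refine ⟨0, ?_, ?_⟩
    · intro a ha
      exact absurd ⟨a, ha⟩ hA
    · intro x y
      simp only [Pi.zero_apply, sub_zero, norm_zero]
      positivity
end

section
/- Let (X, Z) be a pair of Banach spaces with property (*) with constant C₀. Then for every subset A ⊆ X, every Lipschitz mapping f : A → Z with ‖f(x)‖ < R for all x ∈ A (0 < R < ∞), and every ε > 0, there exists a C¹ smooth Lipschitz mapping h : X → Z such that (i) ‖f(x) − h(x)‖ < ε for every x ∈ A, (ii) ‖h(x)‖ < C₀·Lip(f)^{1/2} + R + ε for every x ∈ X, and (iii) Lip(h) ≤ C₀((1 + 2C₀)·Lip(f) + 2(R + ε)·Lip(f)^{1/2}). -/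
/-!
Approximate `f` within `ε / 2` by a `C¹` map `g` with `Lip g ≤ C₀ L`, and multiply it by a `C¹`
cutoff `θ : X → [0, 1]` that is `1` on `A` and vanishes off the `L^{-1/2}`-neighbourhood of `A`.
The cutoff comes from applying `(*)` to the real function `√L · dist(·, A)` (made `Z`-valued along
a unit vector and read back with a norming functional) and composing with a `C¹` step of slope
`≤ 2`, so that `Lip θ ≤ b · 2C₀√L` for any `b > 1`. On the support of `θ` we have
`‖g‖ < C₀√L + R + ε / 2`, which gives the two bounds on `θ • g`; the factor `b` is absorbed by the
remaining `ε / 2`.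
-/

open Set

noncomputable section

def tent (s : ℝ) : ℝ := max 0 (2 - |4 * s - 2|)

lemma continuous_tent : Continuous tent := by
  unfold tent; fun_prop

lemma tent_nonneg (s : ℝ) : 0 ≤ tent s := le_max_left _ _

lemma tent_le_two (s : ℝ) : tent s ≤ 2 :=
  max_le zero_le_two (sub_le_self _ (abs_nonneg _))

lemma tent_eq_zero {s : ℝ} (hs : s ≤ 0 ∨ 1 ≤ s) : tent s = 0 := by
  refine max_eq_left ?_
  rcases hs with hs | hs
  · rw [abs_of_nonpos (by linarith)]; linarith
  · rw [abs_of_nonneg (by linarith)]; linarith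

lemma integral_tent : ∫ s in (0 : ℝ)..1, tent s = 1 := by
  have left : ∫ s in (0 : ℝ)..1 / 2, tent s = ∫ s in (0 : ℝ)..1 / 2, 4 * s := by
    refine intervalIntegral.integral_congr fun s hs => ?_
    rw [uIcc_of_le (by norm_num)] at hs
    rw [tent, abs_of_nonpos (by linarith [hs.2]), max_eq_right (by linarith [hs.1])]
    ring
  have right : ∫ s in (1 / 2 : ℝ)..1, tent s = ∫ s in (1 / 2 : ℝ)..1, 4 - 4 * s := by
    refine intervalIntegral.integral_congr fun s hs => ?_
    rw [uIcc_of_le (by norm_num)] at hs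
    rw [tent, abs_of_nonneg (by linarith [hs.1]), max_eq_right (by linarith [hs.2])]
    ring
  rw [← intervalIntegral.integral_add_adjacent_intervals (b := 1 / 2)
    (continuous_tent.intervalIntegrable _ _) (continuous_tent.intervalIntegrable _ _), left, right,
    intervalIntegral.integral_sub intervalIntegrable_const
      ((continuous_const_mul (4 : ℝ)).intervalIntegrable _ _),
    intervalIntegral.integral_const_mul, intervalIntegral.integral_const_mul, integral_id,
    integral_id]
  norm_num

def smoothStep (t : ℝ) : ℝ := ∫ s in (0 : ℝ)..t, tent s

lemma hasDerivAt_smoothStep (t : ℝ) : HasDerivAt smoothStep (tent t) t :=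
  (continuous_tent.integral_hasStrictDerivAt 0 t).hasDerivAt

lemma differentiable_smoothStep : Differentiable ℝ smoothStep :=
  fun t => (hasDerivAt_smoothStep t).differentiableAt

lemma deriv_smoothStep : deriv smoothStep = tent :=
  funext fun t => (hasDerivAt_smoothStep t).deriv

lemma contDiff_smoothStep : ContDiff ℝ 1 smoothStep :=
  contDiff_one_iff_deriv.2 ⟨differentiable_smoothStep, deriv_smoothStep ▸ continuous_tent⟩

lemma monotone_smoothStep : Monotone smoothStep :=
  monotone_of_deriv_nonneg differentiable_smoothStep fun t => deriv_smoothStep ▸ tent_nonneg t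

lemma lipschitzWith_smoothStep : LipschitzWith 2 smoothStep :=
  lipschitzWith_of_nnnorm_deriv_le differentiable_smoothStep fun t => by
    rw [deriv_smoothStep, ← NNReal.coe_le_coe, coe_nnnorm, Real.norm_of_nonneg (tent_nonneg t)]
    exact tent_le_two t

lemma smoothStep_of_nonpos {t : ℝ} (ht : t ≤ 0) : smoothStep t = 0 := by
  rw [smoothStep, intervalIntegral.integral_symm, neg_eq_zero]
  refine (intervalIntegral.integral_congr fun s hs => tent_eq_zero (.inl ?_)).trans (by simp)
  rw [uIcc_of_le ht] at hs
  exact hs.2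

lemma smoothStep_of_one_le {t : ℝ} (ht : 1 ≤ t) : smoothStep t = 1 := by
  rw [smoothStep, ← intervalIntegral.integral_add_adjacent_intervals (b := 1)
    (continuous_tent.intervalIntegrable _ _) (continuous_tent.intervalIntegrable _ _),
    integral_tent]
  refine add_eq_left.2 <|
    (intervalIntegral.integral_congr fun s hs => tent_eq_zero (.inr ?_)).trans (by simp)
  rw [uIcc_of_le ht] at hs
  exact hs.1

lemma smoothStep_mem_Icc (t : ℝ) : smoothStep t ∈ Icc 0 1 :=
  ⟨(smoothStep_of_nonpos (min_le_right t 0)).symm.le.trans (monotone_smoothStep (min_le_left t 0)),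
    (monotone_smoothStep (le_max_left t 1)).trans (smoothStep_of_one_le (le_max_right t 1)).le⟩

end

/-- Property `(*)` of the pair `(X, Z)` with constant `C₀`. -/
def SmoothLipschitzApproximable (X Z : Type*) [NormedAddCommGroup X] [NormedSpace ℝ X]
    [NormedAddCommGroup Z] [NormedSpace ℝ Z] (C₀ : ℝ) : Prop :=
  ∀ (A : Set X) (f : X → Z) (L : ℝ), 0 ≤ L →
    (∀ x ∈ A, ∀ y ∈ A, ‖f x - f y‖ ≤ L * ‖x - y‖) →
    ∀ ε > (0 : ℝ), ∃ g : X → Z, ContDiff ℝ 1 g ∧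
      (∀ x ∈ A, ‖f x - g x‖ < ε) ∧ ∀ x y : X, ‖g x - g y‖ ≤ C₀ * L * ‖x - y‖

namespace SmoothLipschitzApproximable

variable {X Z : Type*} [NormedAddCommGroup X] [NormedSpace ℝ X]
  [NormedAddCommGroup Z] [NormedSpace ℝ Z] {C₀ : ℝ}

theorem real [Nontrivial Z] (h : SmoothLipschitzApproximable X Z C₀) :
    SmoothLipschitzApproximable X ℝ C₀ := by
  intro A f L hL hf ε hε
  obtain ⟨z, hz⟩ := exists_norm_eq Z zero_le_one
  obtain ⟨φ, hφ, hφz⟩ := exists_dual_vector ℝ z (by simp [hz])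
  have hF : ∀ x ∈ A, ∀ y ∈ A, ‖f x • z - f y • z‖ ≤ L * ‖x - y‖ := fun x hx y hy => by
    simpa [← sub_smul, norm_smul, hz] using hf x hx y hy
  obtain ⟨G, hG, hfG, hGL⟩ := h A (fun x => f x • z) L hL hF ε hε
  have hφle : ∀ v, ‖φ v‖ ≤ ‖v‖ := fun v => by simpa [hφ] using φ.le_opNorm v
  refine ⟨fun x => φ (G x), φ.contDiff.comp hG, fun x hx => ?_, fun x y => ?_⟩
  · calc ‖f x - φ (G x)‖ = ‖φ (f x • z - G x)‖ := by simp [hφz, hz]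
      _ < ε := (hφle _).trans_lt (hfG x hx)
  · calc ‖φ (G x) - φ (G y)‖ = ‖φ (G x - G y)‖ := by rw [map_sub]
      _ ≤ C₀ * L * ‖x - y‖ := (hφle _).trans (hGL x y)

theorem exists_cutoff (h : SmoothLipschitzApproximable X ℝ C₀) (A : Set X) {σ b : ℝ}
    (hσ : 0 ≤ σ) (hb : 1 < b) :
    ∃ θ : X → ℝ, ContDiff ℝ 1 θ ∧ (∀ x, θ x ∈ Icc 0 1) ∧ (∀ x ∈ A, θ x = 1) ∧
      (∀ x, θ x ≠ 0 → σ * Metric.infDist x A < 1) ∧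
      ∀ x y, |θ x - θ y| ≤ b * (2 * C₀ * σ) * ‖x - y‖ := by
  set δ := (1 - b⁻¹) / 2
  have hδ : 0 < δ := by have := inv_lt_one_of_one_lt₀ hb; simp only [δ]; linarith
  have hd : ∀ x ∈ univ, ∀ y ∈ univ,
      ‖σ * Metric.infDist x A - σ * Metric.infDist y A‖ ≤ σ * ‖x - y‖ := fun x _ y _ => by
    rw [← mul_sub, norm_mul, Real.norm_of_nonneg hσ, ← dist_eq_norm, ← dist_eq_norm]
    gcongr
    simpa using (Metric.lipschitz_infDist_pt A).dist_le_mul x y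
  obtain ⟨u, hu, hdu, huL⟩ := h univ _ σ hσ hd δ hδ
  -- the argument of `smoothStep` is `≥ 1` where `u < δ` and `≤ 0` where `u ≥ 1 - δ`
  refine ⟨fun x => smoothStep (1 + b * (δ - u x)), contDiff_smoothStep.comp (by fun_prop),
    fun x => smoothStep_mem_Icc _, fun x hx => smoothStep_of_one_le ?_, fun x hx => ?_,
    fun x y => ?_⟩
  · have hux := hdu x trivial
    rw [Metric.infDist_zero_of_mem hx, mul_zero, zero_sub, norm_neg, Real.norm_eq_abs] at hux
    nlinarith [le_abs_self (u x)]
  · by_contra! hσx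
    refine hx (smoothStep_of_nonpos ?_)
    have hux := (abs_lt.1 (hdu x trivial)).2
    have hbδ : b * (1 - 2 * δ) = 1 := by simp only [δ]; field_simp; ring
    nlinarith
  · have hψ := lipschitzWith_smoothStep.dist_le_mul (1 + b * (δ - u x)) (1 + b * (δ - u y))
    have huxy := huL x y
    rw [Real.dist_eq, Real.dist_eq, NNReal.coe_ofNat] at hψ
    rw [Real.norm_eq_abs] at huxy
    calc |smoothStep (1 + b * (δ - u x)) - smoothStep (1 + b * (δ - u y))|
        ≤ 2 * b * |u x - u y| := hψ.trans_eq <| by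
          rw [show 1 + b * (δ - u x) - (1 + b * (δ - u y)) = -b * (u x - u y) by ring, abs_mul,
            abs_neg, abs_of_pos (by linarith)]
          ring
      _ ≤ b * (2 * C₀ * σ) * ‖x - y‖ := by nlinarith

end SmoothLipschitzApproximable

section

variable {X Z : Type*} [NormedAddCommGroup X] [NormedAddCommGroup Z]

lemma norm_lt_add_mul_of_infDist_lt {g : X → Z} {A : Set X} {K R r : ℝ} {x : X}
    (hA : A.Nonempty) (hK : 0 ≤ K) (hg : ∀ x y, ‖g x - g y‖ ≤ K * ‖x - y‖)
    (hgA : ∀ a ∈ A, ‖g a‖ < R) (hx : Metric.infDist x A < r) : ‖g x‖ < R + K * r := by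
  obtain ⟨a, ha, hxa⟩ := (Metric.infDist_lt_iff hA).1 hx
  rw [dist_eq_norm] at hxa
  calc ‖g x‖ ≤ ‖g a‖ + ‖g x - g a‖ := norm_le_norm_add_norm_sub' (g x) (g a)
    _ < R + K * r := add_lt_add_of_lt_of_le (hgA a ha) ((hg x a).trans (by gcongr))

lemma norm_smul_sub_smul_le [NormedSpace ℝ Z] {θ : X → ℝ} {g : X → Z} {K κ M : ℝ}
    (hθ : ∀ x, θ x ∈ Icc 0 1) (hθL : ∀ x y, |θ x - θ y| ≤ κ * ‖x - y‖)
    (hgL : ∀ x y, ‖g x - g y‖ ≤ K * ‖x - y‖) (hM : 0 ≤ M) (hgM : ∀ y, θ y ≠ 0 → ‖g y‖ ≤ M)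
    (x y : X) : ‖θ x • g x - θ y • g y‖ ≤ (K + κ * M) * ‖x - y‖ := by
  wlog hy : θ y ≠ 0 generalizing x y
  · rcases eq_or_ne (θ x) 0 with hx | hx
    · have hK := (norm_nonneg _).trans (hgL x y)
      have hκ := (abs_nonneg _).trans (hθL x y)
      simp only [hx, not_not.1 hy, zero_smul, sub_zero, norm_zero]
      nlinarith
    · rw [norm_sub_rev, norm_sub_rev x]
      exact this y x hx
  calc ‖θ x • g x - θ y • g y‖ = ‖θ x • (g x - g y) + (θ x - θ y) • g y‖ := by
        rw [smul_sub, sub_smul]; abel_nf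
    _ ≤ |θ x| * ‖g x - g y‖ + |θ x - θ y| * ‖g y‖ := by
        simpa only [norm_smul, Real.norm_eq_abs] using
          norm_add_le (θ x • (g x - g y)) ((θ x - θ y) • g y)
    _ ≤ 1 * (K * ‖x - y‖) + κ * ‖x - y‖ * M := by
        rw [abs_of_nonneg (hθ x).1]
        exact add_le_add (mul_le_mul (hθ x).2 (hgL x y) (norm_nonneg _) zero_le_one)
          (mul_le_mul (hθL x y) (hgM y hy) (norm_nonneg _) ((abs_nonneg _).trans (hθL x y)))
    _ = (K + κ * M) * ‖x - y‖ := by ring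

end

theorem smooth_bounded_approximation_of_bounded_lipschitz_general
    {X Z : Type*} [NormedAddCommGroup X] [NormedSpace ℝ X]
    [NormedAddCommGroup Z] [NormedSpace ℝ Z]
    (C₀ : ℝ) (hC₀ : 1 ≤ C₀)
    (hstar : ∀ (A : Set X) (f : X → Z) (L : ℝ), 0 ≤ L →
      (∀ x ∈ A, ∀ y ∈ A, ‖f x - f y‖ ≤ L * ‖x - y‖) →
      ∀ ε > (0 : ℝ), ∃ g : X → Z, ContDiff ℝ 1 g ∧
        (∀ x ∈ A, ‖f x - g x‖ < ε) ∧ ∀ x y : X, ‖g x - g y‖ ≤ C₀ * L * ‖x - y‖)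
    (A : Set X) (f : X → Z) (L R ε : ℝ) (hL : 0 < L) (hR : 0 < R) (hε : 0 < ε)
    (hf : ∀ x ∈ A, ∀ y ∈ A, ‖f x - f y‖ ≤ L * ‖x - y‖)
    (hfR : ∀ x ∈ A, ‖f x‖ < R) :
    ∃ h : X → Z, ContDiff ℝ 1 h ∧
      (∀ x ∈ A, ‖f x - h x‖ < ε) ∧
      (∀ x : X, ‖h x‖ < C₀ * Real.sqrt L + R + ε) ∧
      (∀ x y : X, ‖h x - h y‖ ≤ C₀ * ((1 + 2 * C₀) * L + 2 * (R + ε) * Real.sqrt L) * ‖x - y‖) := by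
  have hC₀pos : 0 < C₀ := zero_lt_one.trans_le hC₀
  by_cases hf0 : ∀ x ∈ A, f x = 0
  · refine ⟨0, contDiff_const, fun x hx => by simpa [hf0 x hx], fun x => ?_, fun x y => ?_⟩
    · simp only [Pi.zero_apply, norm_zero]; positivity
    · simp only [Pi.zero_apply, sub_zero, norm_zero]; positivity
  push Not at hf0
  obtain ⟨a, ha, hfa⟩ := hf0
  have : Nontrivial Z := ⟨⟨f a, 0, hfa⟩⟩
  set σ := √L
  have hσ : 0 < σ := Real.sqrt_pos.2 hL
  have hσL : σ ^ 2 = L := Real.sq_sqrt hL.le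
  set M := C₀ * σ + R + ε / 2
  have hM : 0 < M := by positivity
  obtain ⟨g, hg, hfg, hgL⟩ := hstar A f L hL.le hf (ε / 2) (half_pos hε)
  obtain ⟨θ, hθ, hθI, hθA, hθsupp, hθL⟩ := (SmoothLipschitzApproximable.real hstar).exists_cutoff
    A hσ.le (b := (M + ε / 2) / M) ((one_lt_div hM).2 (by linarith))
  have hgA : ∀ a ∈ A, ‖g a‖ < R + ε / 2 := fun a ha => by
    linarith [hfR a ha, hfg a ha, norm_le_norm_add_norm_sub (f a) (g a)]
  have hgM : ∀ y, θ y ≠ 0 → ‖g y‖ < M := fun y hy => by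
    have hr : Metric.infDist y A < 1 / σ := (lt_div_iff₀' hσ).2 (hθsupp y hy)
    convert norm_lt_add_mul_of_infDist_lt ⟨a, ha⟩ (by positivity) hgL hgA hr using 1
    rw [← hσL]; field_simp; ring
  refine ⟨fun x => θ x • g x, hθ.smul hg, fun x hx => ?_, fun x => ?_, fun x y => ?_⟩
  · simpa [hθA x hx] using (hfg x hx).trans (half_lt_self hε)
  · rcases eq_or_ne (θ x) 0 with h0 | h0
    · simpa [h0] using (by positivity : 0 < C₀ * σ + R + ε)
    · calc ‖θ x • g x‖ ≤ ‖g x‖ := by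
            rw [norm_smul, Real.norm_of_nonneg (hθI x).1]
            exact mul_le_of_le_one_left (norm_nonneg _) (hθI x).2
        _ < M + ε / 2 := (hgM x h0).trans (by linarith)
        _ = _ := by ring
  · calc _ ≤ (C₀ * L + (M + ε / 2) / M * (2 * C₀ * σ) * M) * ‖x - y‖ :=
          norm_smul_sub_smul_le hθI hθL hgL hM.le (fun y hy => (hgM y hy).le) x y
      _ = _ := by
          rw [show (M + ε / 2) / M * (2 * C₀ * σ) * M = (M + ε / 2) * (2 * C₀ * σ) by field_simp]
          linear_combination 2 * C₀ ^ 2 * ‖x - y‖ * hσL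

/-- Lemma 2.3: under property (*) with constant `C₀`, a bounded Lipschitz map `f : A → B_Z(0,R)`
admits a `C¹` smooth Lipschitz approximation `h` on `X` which is globally bounded by
`C₀·Lip(f)^{1/2} + R + ε` and has Lipschitz constant at most
`C₀((1+2C₀)·Lip(f) + 2(R+ε)·Lip(f)^{1/2})`. -/
theorem smooth_bounded_approximation_of_bounded_lipschitz
    {X Z : Type*} [NormedAddCommGroup X] [NormedSpace ℝ X] [CompleteSpace X]
    [NormedAddCommGroup Z] [NormedSpace ℝ Z] [CompleteSpace Z]
    (C₀ : ℝ) (hC₀ : 1 ≤ C₀)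
    (hstar : ∀ (A : Set X) (f : X → Z) (L : ℝ), 0 ≤ L →
      (∀ x ∈ A, ∀ y ∈ A, ‖f x - f y‖ ≤ L * ‖x - y‖) →
      ∀ ε > (0 : ℝ), ∃ g : X → Z, ContDiff ℝ 1 g ∧
        (∀ x ∈ A, ‖f x - g x‖ < ε) ∧ ∀ x y : X, ‖g x - g y‖ ≤ C₀ * L * ‖x - y‖)
    (A : Set X) (f : X → Z) (L R ε : ℝ) (hL : 0 < L) (hR : 0 < R) (hε : 0 < ε)
    (hf : ∀ x ∈ A, ∀ y ∈ A, ‖f x - f y‖ ≤ L * ‖x - y‖)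
    (hfR : ∀ x ∈ A, ‖f x‖ < R) :
    ∃ h : X → Z, ContDiff ℝ 1 h ∧
      (∀ x ∈ A, ‖f x - h x‖ < ε) ∧
      (∀ x : X, ‖h x‖ < C₀ * Real.sqrt L + R + ε) ∧
      (∀ x y : X, ‖h x - h y‖ ≤ C₀ * ((1 + 2 * C₀) * L + 2 * (R + ε) * Real.sqrt L) * ‖x - y‖) :=
  smooth_bounded_approximation_of_bounded_lipschitz_general C₀ hC₀ hstar A f L R ε hL hR hε hf hfR
end

section
/- Let (X, Z) be a pair of Banach spaces such that there is a constant C ≥ 1 with the property: for every closed subset A ⊆ X and every Lipschitz mapping f : A → Z satisfying the mean value condition for a bounded map D with M = sup_{y∈A}‖D(y)‖ < ∞, there exists a C¹ smooth Lipschitz extension G of f to X with Lip(G) ≤ C(M + Lip(f)). Then the pair (X, Z) satisfies property (*) : for every subset A ⊆ X, every Lipschitz mapping f : A → Z and every ε > 0 there is a C¹ smooth Lipschitz mapping g : X → Z with ‖f(x) − g(x)‖ < ε on A and Lip(g) ≤ C·Lip(f). -/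
/-!
Take a maximal `η`-separated subset `N` of `A`; it is closed and `η`-dense in `A`. Since distinct
points of `N` are more than `η` apart, the restriction `f|N` satisfies the mean value
condition with `D = 0`, so it has a `C¹` extension `G` with `Lip(G) ≤ C Lip(f)`. For `a ∈ A` and
`n ∈ N` with `‖a - n‖ ≤ η` we get `‖f a - G a‖ ≤ ‖f a - f n‖ + ‖G n - G a‖ ≤ (1 + C) Lip(f) η`,
which is below `ε` for small `η`.
-/

open Metric NNReal ENNReal

namespace Metric

lemma exists_maximal_isSeparated {X : Type*} [PseudoEMetricSpace X] (ε : ℝ≥0∞) (s : Set X) :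
    ∃ N, Maximal (fun N ↦ N ⊆ s ∧ IsSeparated ε N) N :=
  zorn_subset _ fun c hcS hc ↦
    ⟨⋃₀ c, ⟨Set.sUnion_subset fun _ hN ↦ (hcS hN).1,
      (Set.pairwise_sUnion hc.directedOn).2 fun _ hN ↦ (hcS hN).2⟩,
      fun _ ↦ Set.subset_sUnion_of_mem⟩

lemma IsSeparated.isClosed {X : Type*} [EMetricSpace X] {ε : ℝ≥0∞} {s : Set X} (hε : ε ≠ 0)
    (hs : IsSeparated ε s) : IsClosed s :=
  isClosed_of_spaced_out (edist_mem_uniformity (pos_iff_ne_zero.2 hε))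
    (hs.mono' fun _ _ h ↦ h.not_gt)

end Metric

section MeanValueCondition

variable {𝕜 X Z : Type*} [NormedField 𝕜] [SeminormedAddCommGroup X] [NormedSpace 𝕜 X]
  [SeminormedAddCommGroup Z] [NormedSpace 𝕜 Z]

variable (𝕜) in
def SatisfiesMeanValueCondition (A : Set X) (f : X → Z) (D : X → X →L[𝕜] Z) : Prop :=
  ∀ y ∈ A, ∀ ε > (0 : ℝ), ∃ r > (0 : ℝ), ∀ z ∈ A ∩ ball y r, ∀ w ∈ A ∩ ball y r,
    ‖f z - f w - D y (z - w)‖ ≤ ε * ‖z - w‖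

lemma Metric.IsSeparated.satisfiesMeanValueCondition_zero {N : Set X} {η : ℝ≥0}
    (hη : η ≠ 0) (hN : IsSeparated η N) (f : X → Z) :
    SatisfiesMeanValueCondition 𝕜 N f 0 := by
  intro y _ ε hε
  refine ⟨η / 2, by positivity, fun z hz w hw ↦ ?_⟩
  obtain rfl : z = w := by
    by_contra hzw
    have hlt : dist z w < η := by
      linarith [dist_triangle_right z w y, mem_ball.1 hz.2, mem_ball.1 hw.2]
    exact (hN hz.1 hw.1 hzw).not_gt (edist_lt_coe.2 hlt)
  simp

end MeanValueCondition

lemma norm_sub_le_of_eqOn_of_isCover {X Z : Type*} [SeminormedAddCommGroup X]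
    [SeminormedAddCommGroup Z] {A N : Set X} {f G : X → Z} {L K : ℝ} {η : ℝ≥0}
    (hf : ∀ x ∈ A, ∀ y ∈ A, ‖f x - f y‖ ≤ L * ‖x - y‖) (hG : ∀ x y, ‖G x - G y‖ ≤ K * ‖x - y‖)
    (hLK : 0 ≤ L + K) (hNA : N ⊆ A) (hGf : Set.EqOn G f N) (hcov : IsCover η A N)
    {a : X} (ha : a ∈ A) : ‖f a - G a‖ ≤ (L + K) * η := by
  obtain ⟨n, hn, han⟩ := hcov ha
  have han : ‖a - n‖ ≤ η := by simpa [← dist_eq_norm] using edist_le_coe.1 han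
  calc ‖f a - G a‖ = ‖(f a - f n) + (G n - G a)‖ := by rw [hGf hn, sub_add_sub_cancel]
    _ ≤ L * ‖a - n‖ + K * ‖a - n‖ := by
      grw [norm_add_le, hf a ha n (hNA hn), hG n a, norm_sub_rev n a]
    _ ≤ (L + K) * η := by rw [← add_mul]; gcongr

theorem property_star_of_smooth_extension_property_general
    {X Z : Type*} [NormedAddCommGroup X] [NormedSpace ℝ X]
    [NormedAddCommGroup Z] [NormedSpace ℝ Z]
    (C : ℝ) (hC : 1 ≤ C)
    (hext : ∀ (A : Set X), IsClosed A → ∀ (f : X → Z) (L M : ℝ) (D : X → X →L[ℝ] Z),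
      0 ≤ L → 0 ≤ M →
      (∀ x ∈ A, ∀ y ∈ A, ‖f x - f y‖ ≤ L * ‖x - y‖) →
      ContinuousOn D A → (∀ y ∈ A, ‖D y‖ ≤ M) →
      (∀ y ∈ A, ∀ ε > (0 : ℝ), ∃ r > (0 : ℝ),
        ∀ z ∈ A ∩ Metric.ball y r, ∀ w ∈ A ∩ Metric.ball y r,
          ‖f z - f w - D y (z - w)‖ ≤ ε * ‖z - w‖) →
      ∃ G : X → Z, ContDiff ℝ 1 G ∧ (∀ a ∈ A, G a = f a) ∧
        ∀ x y : X, ‖G x - G y‖ ≤ C * (M + L) * ‖x - y‖) :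
    ∀ (A : Set X) (f : X → Z) (L : ℝ), 0 ≤ L →
      (∀ x ∈ A, ∀ y ∈ A, ‖f x - f y‖ ≤ L * ‖x - y‖) →
      ∀ ε > (0 : ℝ), ∃ g : X → Z, ContDiff ℝ 1 g ∧
        (∀ x ∈ A, ‖f x - g x‖ < ε) ∧ ∀ x y : X, ‖g x - g y‖ ≤ C * L * ‖x - y‖ := by
  intro A f L hL hf ε hε
  obtain ⟨η, hη, hηε⟩ := exists_pos_mul_lt hε (L + C * L)
  lift η to ℝ≥0 using hη.le
  replace hη : η ≠ 0 := by exact_mod_cast hη.ne'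
  obtain ⟨N, hN⟩ := exists_maximal_isSeparated η A
  obtain ⟨hNA, hNsep⟩ := hN.prop
  obtain ⟨G, hG, hGf, hGlip⟩ := hext N (hNsep.isClosed (by simpa using hη)) f L 0 0 hL le_rfl
    (fun x hx y hy ↦ hf x (hNA hx) y (hNA hy)) continuousOn_const (by simp)
    (hNsep.satisfiesMeanValueCondition_zero hη f)
  rw [zero_add] at hGlip
  refine ⟨G, hG, fun a ha ↦ ?_, hGlip⟩
  calc ‖f a - G a‖ ≤ (L + C * L) * η :=
        norm_sub_le_of_eqOn_of_isCover hf (by simpa only [mul_assoc] using hGlip)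
          (by nlinarith) hNA hGf (.of_maximal_isSeparated hN) ha
    _ < ε := hηε

/-- Proposition 3.8: if every Lipschitz map on a closed subset satisfying the mean value
condition for a bounded map `D` (with bound `M`) admits a `C¹` smooth Lipschitz extension
with `Lip(G) ≤ C(M + Lip(f))`, then the pair `(X, Z)` satisfies property (*) with constant `C`. -/
theorem property_star_of_smooth_extension_property
    {X Z : Type*} [NormedAddCommGroup X] [NormedSpace ℝ X] [CompleteSpace X]
    [NormedAddCommGroup Z] [NormedSpace ℝ Z] [CompleteSpace Z]
    (C : ℝ) (hC : 1 ≤ C)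
    (hext : ∀ (A : Set X), IsClosed A → ∀ (f : X → Z) (L M : ℝ) (D : X → X →L[ℝ] Z),
      0 ≤ L → 0 ≤ M →
      (∀ x ∈ A, ∀ y ∈ A, ‖f x - f y‖ ≤ L * ‖x - y‖) →
      ContinuousOn D A → (∀ y ∈ A, ‖D y‖ ≤ M) →
      (∀ y ∈ A, ∀ ε > (0 : ℝ), ∃ r > (0 : ℝ),
        ∀ z ∈ A ∩ Metric.ball y r, ∀ w ∈ A ∩ Metric.ball y r,
          ‖f z - f w - D y (z - w)‖ ≤ ε * ‖z - w‖) →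
      ∃ G : X → Z, ContDiff ℝ 1 G ∧ (∀ a ∈ A, G a = f a) ∧
        ∀ x y : X, ‖G x - G y‖ ≤ C * (M + L) * ‖x - y‖) :
    ∀ (A : Set X) (f : X → Z) (L : ℝ), 0 ≤ L →
      (∀ x ∈ A, ∀ y ∈ A, ‖f x - f y‖ ≤ L * ‖x - y‖) →
      ∀ ε > (0 : ℝ), ∃ g : X → Z, ContDiff ℝ 1 g ∧
        (∀ x ∈ A, ‖f x - g x‖ < ε) ∧ ∀ x y : X, ‖g x - g y‖ ≤ C * L * ‖x - y‖ :=
  property_star_of_smooth_extension_property_general C hC hext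
end

section
/- Suppose X and Z are Banach spaces, Y is a closed subspace of X, and for some constant C ≥ 1 every C¹ smooth Lipschitz mapping f : Y → Z extends to a C¹ smooth Lipschitz mapping F : X → Z with Lip(F) ≤ C·Lip(f). Then for every bounded linear operator T : Y → Z there exists a bounded linear operator T̃ : X → Z with T̃|_Y = T and ‖T̃‖ ≤ C‖T‖. -/
/-!
Apply the extension property to `T` itself and take `T̃ = F'(0)` for the resulting extension `F`.
Since `F` agrees with the linear map `T` on `Y`, the chain rule restricts `F'(0)` to `T` on `Y`,
and the derivative of a `C‖T‖`-Lipschitz map has norm at most `C‖T‖`.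
-/

theorem fderiv_comp_eq_of_comp_eq {𝕜 E X Z : Type*} [NontriviallyNormedField 𝕜]
    [NormedAddCommGroup E] [NormedSpace 𝕜 E] [NormedAddCommGroup X] [NormedSpace 𝕜 X]
    [NormedAddCommGroup Z] [NormedSpace 𝕜 Z] {F : X → Z} {L : E →L[𝕜] X} {T : E →L[𝕜] Z}
    {e : E} (hF : DifferentiableAt 𝕜 F (L e)) (hFL : F ∘ L = T) :
    (fderiv 𝕜 F (L e)).comp L = T :=
  (hF.hasFDerivAt.comp e L.hasFDerivAt).unique (hFL ▸ T.hasFDerivAt)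

theorem linear_extension_of_smooth_lipschitz_extension_general
    {X Z : Type*} [NormedAddCommGroup X] [NormedSpace ℝ X]
    [NormedAddCommGroup Z] [NormedSpace ℝ Z]
    (Y : Subspace ℝ X)
    (C : ℝ) (hC : 1 ≤ C)
    (hext : ∀ (f : ↥Y → Z) (L : ℝ), 0 ≤ L → ContDiff ℝ 1 f →
      (∀ a b : ↥Y, ‖f a - f b‖ ≤ L * ‖a - b‖) →
      ∃ F : X → Z, ContDiff ℝ 1 F ∧ (∀ y : ↥Y, F (y : X) = f y) ∧
        ∀ x y : X, ‖F x - F y‖ ≤ C * L * ‖x - y‖) :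
    ∀ T : ↥Y →L[ℝ] Z, ∃ T' : X →L[ℝ] Z,
      (∀ y : ↥Y, T' (y : X) = T y) ∧ ‖T'‖ ≤ C * ‖T‖ := by
  intro T
  obtain ⟨F, hF, hFT, hFlip⟩ := hext T ‖T‖ (norm_nonneg T) T.contDiff
    fun a b => T.lipschitz.norm_sub_le a b
  have hF0 : DifferentiableAt ℝ F (Y.subtypeL 0) := hF.differentiable one_ne_zero _
  have hrestrict : (fderiv ℝ F (Y.subtypeL 0)).comp Y.subtypeL = T :=
    fderiv_comp_eq_of_comp_eq hF0 (funext hFT)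
  have hC₀ : 0 ≤ C * ‖T‖ := by positivity
  refine ⟨fderiv ℝ F 0, fun y => ?_, ?_⟩
  · simpa using congr($hrestrict y)
  · exact norm_fderiv_le_of_lip' ℝ hC₀ (.of_forall fun x => hFlip x 0)

/-- If every `C¹` smooth Lipschitz mapping `f : Y → Z` defined on a closed subspace `Y ⊆ X`
extends to a `C¹` smooth Lipschitz mapping `F : X → Z` with `Lip(F) ≤ C·Lip(f)`, then every
bounded linear operator `T : Y → Z` extends to a bounded linear operator `T̃ : X → Z` with
`‖T̃‖ ≤ C‖T‖`. -/
theorem linear_extension_of_smooth_lipschitz_extension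
    {X Z : Type*} [NormedAddCommGroup X] [NormedSpace ℝ X] [CompleteSpace X]
    [NormedAddCommGroup Z] [NormedSpace ℝ Z] [CompleteSpace Z]
    (Y : Subspace ℝ X) (hY : IsClosed (Y : Set X))
    (C : ℝ) (hC : 1 ≤ C)
    (hext : ∀ (f : ↥Y → Z) (L : ℝ), 0 ≤ L → ContDiff ℝ 1 f →
      (∀ a b : ↥Y, ‖f a - f b‖ ≤ L * ‖a - b‖) →
      ∃ F : X → Z, ContDiff ℝ 1 F ∧ (∀ y : ↥Y, F (y : X) = f y) ∧
        ∀ x y : X, ‖F x - F y‖ ≤ C * L * ‖x - y‖) :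
    ∀ T : ↥Y →L[ℝ] Z, ∃ T' : X →L[ℝ] Z,
      (∀ y : ↥Y, T' (y : X) = T y) ∧ ‖T'‖ ≤ C * ‖T‖ :=
  linear_extension_of_smooth_lipschitz_extension_general Y C hC hext
end

section
/- Let X and Z be Banach spaces and Y a closed subspace of X. Suppose there exists an extension morphism for C¹ Lipschitz functions, i.e., a bounded linear map T : C¹_L(Y) → C¹_L(X) with T(f)|_Y = f for all f ∈ C¹_L(Y). Then there exists a bounded linear extension morphism S : Y* → X* with S(φ)|_Y = φ for all φ ∈ Y* and ‖S‖ ≤ ‖T‖. -/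
/-- Membership in the space `C¹_L(E)` of `C¹` smooth Lipschitz real-valued functions. -/
def MemC1L {E : Type*} [NormedAddCommGroup E] [NormedSpace ℝ E] (f : E → ℝ) : Prop :=
  ContDiff ℝ 1 f ∧ ∃ K : NNReal, LipschitzWith K f

/-- The (least) Lipschitz constant of a real-valued function. -/
noncomputable def lipC {E : Type*} [NormedAddCommGroup E] (f : E → ℝ) : ℝ :=
  sInf {L : ℝ | 0 ≤ L ∧ ∀ x y : E, |f x - f y| ≤ L * ‖x - y‖}

/-!
The extension `S φ` is the derivative at `0` of `T φ`. It is linear because `T` and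
differentiation are, it extends `φ` because `T φ` agrees with the linear map `φ` on `Y`,
and `‖(T φ)'(0)‖ ≤ Lip(T φ) ≤ M (|φ 0| + Lip φ) = M ‖φ‖`, since the Lipschitz constant of a
linear functional is its norm.
-/

section Derivative

variable {𝕜 V E F : Type*} [NontriviallyNormedField 𝕜] [AddCommGroup V] [Module 𝕜 V]
  [NormedAddCommGroup E] [NormedSpace 𝕜 E] [NormedAddCommGroup F] [NormedSpace 𝕜 F]

noncomputable def LinearMap.fderivAt (A : V →ₗ[𝕜] E → F) (x : E)
    (hA : ∀ v, DifferentiableAt 𝕜 (A v) x) : V →ₗ[𝕜] E →L[𝕜] F where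
  toFun v := fderiv 𝕜 (A v) x
  map_add' v w := by rw [map_add]; exact fderiv_add (hA v) (hA w)
  map_smul' c v := by rw [map_smul]; exact fderiv_const_smul (hA v) c

lemma fderiv_zero_apply_of_eq_on_submodule {Y : Submodule 𝕜 E} {g : E → F} {φ : Y →L[𝕜] F}
    (hg : DifferentiableAt 𝕜 g 0) (hgφ : ∀ y : Y, g y = φ y) (y : Y) :
    fderiv 𝕜 g 0 y = φ y := by
  have hrestrict : HasFDerivAt (g ∘ Y.subtypeL) ((fderiv 𝕜 g 0).comp Y.subtypeL) 0 :=
    (map_zero Y.subtypeL ▸ hg.hasFDerivAt).comp 0 Y.subtypeL.hasFDerivAt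
  have hφ : g ∘ Y.subtypeL = φ := funext hgφ
  rw [hφ] at hrestrict
  exact congrArg (· y) (φ.hasFDerivAt.unique hrestrict).symm

end Derivative

section LipschitzConstant

variable {E : Type*} [NormedAddCommGroup E] [NormedSpace ℝ E]

lemma memC1L_continuousLinearMap (φ : E →L[ℝ] ℝ) : MemC1L (φ : E → ℝ) :=
  ⟨φ.contDiff, ‖φ‖₊, φ.lipschitz⟩

lemma norm_fderiv_le_lipC {f : E → ℝ} (hf : MemC1L f) (x : E) :
    ‖fderiv ℝ f x‖ ≤ lipC f := by
  obtain ⟨-, K, hK⟩ := hf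
  refine le_csInf ⟨K, K.coe_nonneg, fun x y => ?_⟩ ?_
  · simpa [Real.dist_eq, dist_eq_norm] using hK.dist_le_mul x y
  rintro L ⟨hL0, hL⟩
  have hLip : LipschitzWith ⟨L, hL0⟩ f :=
    LipschitzWith.of_dist_le_mul fun x y => by
      rw [Real.dist_eq, dist_eq_norm]; exact hL x y
  exact norm_fderiv_le_of_lipschitz ℝ hLip

lemma lipC_continuousLinearMap (φ : E →L[ℝ] ℝ) : lipC (φ : E → ℝ) = ‖φ‖ := by
  refine le_antisymm (csInf_le ⟨0, fun L hL => hL.1⟩ ⟨norm_nonneg φ, fun x y => ?_⟩) ?_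
  · rw [← map_sub]; exact φ.le_opNorm (x - y)
  · simpa only [φ.fderiv] using norm_fderiv_le_lipC (memC1L_continuousLinearMap φ) 0

end LipschitzConstant

theorem dual_extension_morphism_of_C1L_extension_morphism_general
    {X : Type*} [NormedAddCommGroup X] [NormedSpace ℝ X]
    (Y : Subspace ℝ X)
    (M : ℝ)
    (T : (↥Y → ℝ) →ₗ[ℝ] (X → ℝ))
    (hTC1 : ∀ f : ↥Y → ℝ, MemC1L f → MemC1L (T f))
    (hText : ∀ f : ↥Y → ℝ, MemC1L f → ∀ y : ↥Y, T f (y : X) = f y)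
    (hTbd : ∀ f : ↥Y → ℝ, MemC1L f → |T f 0| + lipC (T f) ≤ M * (|f 0| + lipC f)) :
    ∃ S : (↥Y →L[ℝ] ℝ) →ₗ[ℝ] (X →L[ℝ] ℝ),
      ∀ φ : ↥Y →L[ℝ] ℝ, (∀ y : ↥Y, S φ (y : X) = φ y) ∧ ‖S φ‖ ≤ M * ‖φ‖ := by
  have hφ := memC1L_continuousLinearMap (E := Y)
  have hdiff (φ : Y →L[ℝ] ℝ) : DifferentiableAt ℝ (T φ) 0 :=
    ((hTC1 _ (hφ φ)).1.differentiable one_ne_zero).differentiableAt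
  refine ⟨(T ∘ₗ LinearMap.ltoFun ℝ Y ℝ ℝ ∘ₗ ContinuousLinearMap.coeLM ℝ).fderivAt 0 hdiff,
    fun φ => ⟨fderiv_zero_apply_of_eq_on_submodule (hdiff φ) (hText _ (hφ φ)), ?_⟩⟩
  calc ‖fderiv ℝ (T φ) 0‖ ≤ lipC (T φ) := norm_fderiv_le_lipC (hTC1 _ (hφ φ)) 0
    _ ≤ |T φ 0| + lipC (T φ) := le_add_of_nonneg_left (abs_nonneg _)
    _ ≤ M * (|φ 0| + lipC φ) := hTbd _ (hφ φ)
    _ = M * ‖φ‖ := by rw [map_zero, abs_zero, zero_add, lipC_continuousLinearMap]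

/-- Lemma 4.9: if there is a bounded linear extension morphism `T : C¹_L(Y) → C¹_L(X)`
(of norm at most `M`, with respect to the norm `‖f‖ = |f 0| + Lip(f)`), then there is a
bounded linear extension morphism `S : Y* → X*` with `‖S φ‖ ≤ M‖φ‖` for all `φ ∈ Y*`. -/
theorem dual_extension_morphism_of_C1L_extension_morphism
    {X : Type*} [NormedAddCommGroup X] [NormedSpace ℝ X] [CompleteSpace X]
    (Y : Subspace ℝ X) (hY : IsClosed (Y : Set X))
    (M : ℝ) (hM : 0 ≤ M)
    (T : (↥Y → ℝ) →ₗ[ℝ] (X → ℝ))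
    (hTC1 : ∀ f : ↥Y → ℝ, MemC1L f → MemC1L (T f))
    (hText : ∀ f : ↥Y → ℝ, MemC1L f → ∀ y : ↥Y, T f (y : X) = f y)
    (hTbd : ∀ f : ↥Y → ℝ, MemC1L f → |T f 0| + lipC (T f) ≤ M * (|f 0| + lipC f)) :
    ∃ S : (↥Y →L[ℝ] ℝ) →ₗ[ℝ] (X →L[ℝ] ℝ),
      ∀ φ : ↥Y →L[ℝ] ℝ, (∀ y : ↥Y, S φ (y : X) = φ y) ∧ ‖S φ‖ ≤ M * ‖φ‖ :=
  dual_extension_morphism_of_C1L_extension_morphism_general Y M T hTC1 hText hTbd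
end
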